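/- With λ₁ = iρ, λ₂ = ((√3-i)/2)ρ, λ₃ = -((√3+i)/2)ρ for ρ > 0, the ratio Δ¹₁,₁(ρ)/Δ¹(ρ) := (λ₃-λ₂)e^{-λ₁} / [(λ₃-λ₂)e^{-λ₁} + (λ₁-λ₃)e^{-λ₂} + (λ₂-λ₁)e^{-λ₃}] satisfies: there exist constants C > 0 and ρ₀ > 0 such that |Δ¹₁,₁(ρ)/Δ¹(ρ)| ≤ C e^{-(√3/2)ρ} for all ρ ≥ ρ₀. -/

import Mathlib

noncomputable def lam1 (ρ : ℝ) : ℂ := Complex.I * ρ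
noncomputable def lam2 (ρ : ℝ) : ℂ := ((Real.sqrt 3 : ℂ) - Complex.I) / 2 * ρ
noncomputable def lam3 (ρ : ℝ) : ℂ := -(((Real.sqrt 3 : ℂ) + Complex.I) / 2 * ρ)

noncomputable def Delta1 (ρ : ℝ) : ℂ :=
  (lam3 ρ - lam2 ρ) * Complex.exp (-lam1 ρ) +
  (lam1 ρ - lam3 ρ) * Complex.exp (-lam2 ρ) +
  (lam2 ρ - lam1 ρ) * Complex.exp (-lam3 ρ)

/-!
The three differences `λⱼ - λₖ` all have modulus `√3 ρ`, while `|e^{-λ₁}| = 1`,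
`|e^{-λ₂}| = e^{-(√3/2)ρ}` and `|e^{-λ₃}| = e^{(√3/2)ρ}`. So for large `ρ` the third term of `Δ¹`
dominates the other two, `|Δ¹(ρ)| ≥ (√3/2) ρ e^{(√3/2)ρ}`, and the ratio is at most `2 e^{-(√3/2)ρ}`.
-/

open Complex

lemma norm_div_add_add_le_of_dominant {𝕜 : Type*} [NormedField 𝕜] {u v w : 𝕜}
    (h : ‖u‖ + ‖v‖ ≤ ‖w‖ / 2) : ‖u / (u + v + w)‖ ≤ 2 * ‖u‖ / ‖w‖ := by
  have hsum : ‖w‖ / 2 ≤ ‖u + v + w‖ := by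
    have := norm_sub_norm_le w (-(u + v))
    rw [sub_neg_eq_add, add_comm w] at this
    linarith [norm_add_le u v, norm_neg (u + v)]
  rcases (norm_nonneg u).eq_or_lt with hu | hu
  · simp [← hu]
  rw [norm_div, div_le_div_iff₀ (by linarith [norm_nonneg v]) (by linarith [norm_nonneg v])]
  nlinarith

lemma norm_ofReal_add_ofReal_mul_I_of_sq {x y r : ℝ} (hr : 0 ≤ r) (h : x ^ 2 + y ^ 2 = r ^ 2) :
    ‖(x : ℂ) + y * I‖ = r := by
  rw [norm_add_mul_I, h, Real.sqrt_sq hr]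

lemma norm_lam3_sub_lam2 (ρ : ℝ) : ‖lam3 ρ - lam2 ρ‖ = √3 * |ρ| := by
  have : lam3 ρ - lam2 ρ = ((-(√3 * ρ) : ℝ) : ℂ) := by simp only [lam2, lam3]; push_cast; ring
  rw [this, norm_real, Real.norm_eq_abs, abs_neg, abs_mul, abs_of_nonneg (Real.sqrt_nonneg 3)]

lemma norm_lam1_sub_lam3 (ρ : ℝ) : ‖lam1 ρ - lam3 ρ‖ = √3 * |ρ| := by
  have : lam1 ρ - lam3 ρ = ((√3 / 2 * ρ : ℝ) : ℂ) + ((3 / 2 * ρ : ℝ) : ℂ) * I := by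
    simp only [lam1, lam3]; push_cast; ring
  rw [this]
  refine norm_ofReal_add_ofReal_mul_I_of_sq (by positivity) ?_
  nlinarith [Real.sq_sqrt (show (0 : ℝ) ≤ 3 by norm_num), sq_abs ρ]

lemma norm_lam2_sub_lam1 (ρ : ℝ) : ‖lam2 ρ - lam1 ρ‖ = √3 * |ρ| := by
  have : lam2 ρ - lam1 ρ = ((√3 / 2 * ρ : ℝ) : ℂ) + ((-(3 / 2 * ρ) : ℝ) : ℂ) * I := by
    simp only [lam1, lam2]; push_cast; ring
  rw [this]
  refine norm_ofReal_add_ofReal_mul_I_of_sq (by positivity) ?_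
  nlinarith [Real.sq_sqrt (show (0 : ℝ) ≤ 3 by norm_num), sq_abs ρ]

lemma norm_exp_neg_lam1 (ρ : ℝ) : ‖exp (-lam1 ρ)‖ = 1 := by
  simp [norm_exp, lam1]

lemma norm_exp_neg_lam2 (ρ : ℝ) : ‖exp (-lam2 ρ)‖ = Real.exp (-(√3 / 2 * ρ)) := by
  simp [norm_exp, lam2]

lemma norm_exp_neg_lam3 (ρ : ℝ) : ‖exp (-lam3 ρ)‖ = Real.exp (√3 / 2 * ρ) := by
  simp [norm_exp, lam3]

/-- The ratio Δ¹₁,₁(ρ)/Δ¹(ρ) decays like e^{-(√3/2)ρ} as ρ → ∞. -/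
theorem stmt5 :
    ∃ C > (0 : ℝ), ∃ ρ₀ > (0 : ℝ), ∀ ρ ≥ ρ₀,
      ‖(lam3 ρ - lam2 ρ) * Complex.exp (-lam1 ρ) / Delta1 ρ‖
        ≤ C * Real.exp (-(Real.sqrt 3 / 2) * ρ) := by
  refine ⟨2, two_pos, 2 * √3, by positivity, fun ρ hρ₀ => ?_⟩
  have hρ : 0 < ρ := lt_of_lt_of_le (by positivity) hρ₀
  have ht : 3 ≤ √3 / 2 * ρ := calc
    (3 : ℝ) = √3 / 2 * (2 * √3) := by rw [← mul_assoc, div_mul_cancel₀ _ two_ne_zero,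
      Real.mul_self_sqrt zero_le_three]
    _ ≤ √3 / 2 * ρ := by gcongr
  have hexp : 4 ≤ Real.exp (√3 / 2 * ρ) := by linarith [Real.add_one_le_exp (√3 / 2 * ρ)]
  have hexp_neg : Real.exp (-(√3 / 2 * ρ)) ≤ 1 := Real.exp_le_one_iff.mpr (by linarith)
  have hr : 0 < √3 * |ρ| := by positivity
  have hdom := norm_div_add_add_le_of_dominant (u := (lam3 ρ - lam2 ρ) * exp (-lam1 ρ))
    (v := (lam1 ρ - lam3 ρ) * exp (-lam2 ρ)) (w := (lam2 ρ - lam1 ρ) * exp (-lam3 ρ))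
  simp only [norm_mul, norm_lam3_sub_lam2, norm_lam1_sub_lam3, norm_lam2_sub_lam1,
    norm_exp_neg_lam1, norm_exp_neg_lam2, norm_exp_neg_lam3] at hdom
  calc ‖(lam3 ρ - lam2 ρ) * exp (-lam1 ρ) / Delta1 ρ‖
      ≤ 2 * (√3 * |ρ| * 1) / (√3 * |ρ| * Real.exp (√3 / 2 * ρ)) := hdom (by nlinarith)
    _ = 2 * Real.exp (-(√3 / 2) * ρ) := by
      rw [neg_mul, Real.exp_neg]
      field_simp
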